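/- For every real x > 0 there exists θ_x with 0 < θ_x < 1 such that Ψ(x+1) = ln x + 1/(2x) − 1/(12x^2) + 1/(120x^4) − 1/(252x^6) + θ_x/(240x^8), where Ψ is the digamma function. -/

import Mathlib

/-!
Let `R(t) = Ψ(t+1) - log t - (1/(2t) - 1/(12t²) + 1/(120t⁴) - 1/(252t⁶))`. The recurrence
`Ψ(t+2) = Ψ(t+1) + 1/(t+1)` makes `R(t) - R(t+1)` elementary; it involves
`log (1 + 1/t) = ∑ₖ 2/(2k+1) · (2t+1)^-(2k+1)`. Keeping six terms of this series, and bounding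
the tail by a geometric series, gives `0 < R(t) - R(t+1) < g(t) - g(t+1)` for `g(t) = 1/(240t⁸)`:
after clearing denominators both differences are polynomials in `t` with positive coefficients.
Convexity of `log Γ` squeezes `Ψ(t+1)` between `log t` and `log (t+1)`, so `R(t) → 0`. Hence
`R` and `g - R` strictly decrease to `0` along `x + ℕ`, so `0 < R(x) < g(x)`, and
`θ = 240x⁸R(x)`.
-/

open Real

/-- The digamma function `Ψ(x) = Γ'(x)/Γ(x) = (log ∘ Γ)'(x)`. -/
noncomputable def digamma (x : ℝ) : ℝ := deriv (fun y : ℝ => Real.log (Real.Gamma y)) x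

open Filter Topology Finset

theorem StrictAnti.lt_of_tendsto {α β : Type*} [TopologicalSpace α] [Preorder α]
    [OrderClosedTopology α] [PartialOrder β] [IsDirectedOrder β] [NoMaxOrder β] {f : β → α}
    {a : α} (hf : StrictAnti f) (ha : Tendsto f atTop (𝓝 a)) (b : β) : a < f b := by
  obtain ⟨c, hbc⟩ := exists_gt b
  exact (hf.antitone.le_of_tendsto ha c).trans_lt (hf hbc)

theorem lt_of_add_one_lt_of_tendsto {α : Type*} [TopologicalSpace α] [Preorder α]
    [OrderClosedTopology α] {u : ℝ → α} {a : α} {x : ℝ}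
    (hstep : ∀ t, x ≤ t → u (t + 1) < u t) (hlim : Tendsto u atTop (𝓝 a)) : a < u x := by
  have hanti : StrictAnti fun n : ℕ => u (x + n) := by
    refine strictAnti_nat_of_succ_lt fun n => ?_
    rw [Nat.cast_succ, ← add_assoc]
    exact hstep _ (le_add_of_nonneg_right n.cast_nonneg)
  have hx := hanti.lt_of_tendsto
    (hlim.comp (tendsto_atTop_add_const_left _ x tendsto_natCast_atTop_atTop)) 0
  rwa [Nat.cast_zero, add_zero] at hx

namespace Real

theorem log_add_one_sub_log {t : ℝ} (ht : 0 < t) : log (t + 1) - log t = log (1 + t⁻¹) := by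
  rw [← log_div (by positivity) ht.ne']
  congr 1
  field_simp

theorem sum_range_le_log_one_add_inv {a : ℝ} (ha : 0 < a) (n : ℕ) :
    ∑ k ∈ range n, 2 * (1 / (2 * (k : ℝ) + 1)) * (1 / (2 * a + 1)) ^ (2 * k + 1)
      ≤ log (1 + a⁻¹) :=
  sum_le_hasSum _ (fun _ _ => by positivity) (hasSum_log_one_add_inv ha)

theorem log_one_add_inv_le {a : ℝ} (ha : 0 < a) (n : ℕ) :
    log (1 + a⁻¹) ≤
      ∑ k ∈ range n, 2 * (1 / (2 * (k : ℝ) + 1)) * (1 / (2 * a + 1)) ^ (2 * k + 1)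
        + 2 / (2 * n + 1) * (1 / (2 * a + 1)) ^ (2 * n + 1) / (1 - (1 / (2 * a + 1)) ^ 2) := by
  have htail := (hasSum_nat_add_iff' n).mpr (hasSum_log_one_add_inv ha)
  set v : ℝ := 1 / (2 * a + 1) with hv
  have hv0 : 0 < v := by positivity
  have hv1 : v < 1 := by rw [hv, div_lt_one (by positivity)]; linarith
  have hgeom : HasSum (fun k : ℕ => 2 / (2 * n + 1) * v ^ (2 * n + 1) * (v ^ 2) ^ k)
      (2 / (2 * n + 1) * v ^ (2 * n + 1) / (1 - v ^ 2)) := by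
    simpa [div_eq_mul_inv] using
      (hasSum_geometric_of_lt_one (by positivity) (by nlinarith : v ^ 2 < 1)).mul_left
        (2 / (2 * n + 1) * v ^ (2 * n + 1))
  have hterm (k : ℕ) : 2 * (1 / (2 * ((k + n : ℕ) : ℝ) + 1)) * v ^ (2 * (k + n) + 1) ≤
      2 / (2 * n + 1) * v ^ (2 * n + 1) * (v ^ 2) ^ k :=
    calc _ = 2 * (1 / (2 * ((k + n : ℕ) : ℝ) + 1)) * (v ^ (2 * n + 1) * (v ^ 2) ^ k) := by ring
      _ ≤ 2 * (1 / (2 * n + 1)) * (v ^ (2 * n + 1) * (v ^ 2) ^ k) := by gcongr; simp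
      _ = _ := by ring
  linarith [hasSum_le hterm htail hgeom]

end Real

theorem differentiableAt_log_Gamma {x : ℝ} (hx : 0 < x) :
    DifferentiableAt ℝ (fun y => log (Gamma y)) x := by
  have hx' : ∀ m : ℕ, x ≠ -m := fun m => (neg_nonpos.mpr m.cast_nonneg).trans_lt hx |>.ne'
  exact (differentiableAt_Gamma hx').log (Gamma_ne_zero hx')

theorem log_Gamma_add_one {x : ℝ} (hx : 0 < x) :
    log (Gamma (x + 1)) = log (Gamma x) + log x := by
  rw [Gamma_add_one hx.ne', log_mul hx.ne' (Gamma_pos_of_pos hx).ne', add_comm]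

theorem slope_log_Gamma_add_one {x : ℝ} (hx : 0 < x) :
    slope (log ∘ Gamma) x (x + 1) = log x := by
  rw [slope_def_field, Function.comp_apply, Function.comp_apply, log_Gamma_add_one hx]
  ring

theorem digamma_add_one {x : ℝ} (hx : 0 < x) : digamma (x + 1) = digamma x + x⁻¹ := by
  unfold digamma
  rw [← deriv_comp_add_const, ← deriv_log,
    ← deriv_add (differentiableAt_log_Gamma hx) (differentiableAt_log hx.ne')]
  refine EventuallyEq.deriv_eq ?_
  filter_upwards [eventually_gt_nhds hx] with y hy
  exact log_Gamma_add_one hy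

theorem log_le_digamma_add_one {x : ℝ} (hx : 0 < x) : log x ≤ digamma (x + 1) := by
  rw [← slope_log_Gamma_add_one hx]
  exact convexOn_log_Gamma.slope_le_deriv hx (by simp; linarith) (by linarith)
    (differentiableAt_log_Gamma (by linarith))

theorem digamma_add_one_le_log_add_one {x : ℝ} (hx : 0 < x) :
    digamma (x + 1) ≤ log (x + 1) := by
  have hx1 : 0 < x + 1 := by linarith
  rw [← slope_log_Gamma_add_one hx1]
  exact convexOn_log_Gamma.deriv_le_slope hx1 (by simp; linarith) (by linarith)
    (differentiableAt_log_Gamma hx1)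

theorem tendsto_digamma_add_one_sub_log :
    Tendsto (fun t => digamma (t + 1) - log t) atTop (𝓝 0) := by
  refine squeeze_zero' ?_ ?_ tendsto_inv_atTop_zero
  · filter_upwards [eventually_gt_atTop 0] with t ht
    linarith [log_le_digamma_add_one ht]
  · filter_upwards [eventually_gt_atTop 0] with t ht
    have := log_le_sub_one_of_pos (by positivity : 0 < 1 + t⁻¹)
    linarith [digamma_add_one_le_log_add_one ht, log_add_one_sub_log ht]

theorem tendsto_one_div_const_mul_pow_atTop {c : ℝ} (hc : 0 < c) {k : ℕ} (hk : k ≠ 0) :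
    Tendsto (fun t : ℝ => 1 / (c * t ^ k)) atTop (𝓝 0) :=
  tendsto_const_nhds.div_atTop ((tendsto_pow_atTop hk).const_mul_atTop hc)

noncomputable def digammaAsymptotic (t : ℝ) : ℝ :=
  1 / (2 * t) - 1 / (12 * t ^ 2) + 1 / (120 * t ^ 4) - 1 / (252 * t ^ 6)

noncomputable def digammaRemainder (t : ℝ) : ℝ :=
  digamma (t + 1) - log t - digammaAsymptotic t

theorem tendsto_digammaAsymptotic : Tendsto digammaAsymptotic atTop (𝓝 0) := by
  have h := (((tendsto_one_div_const_mul_pow_atTop (by norm_num : (0 : ℝ) < 2) one_ne_zero).sub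
    (tendsto_one_div_const_mul_pow_atTop (by norm_num : (0 : ℝ) < 12) two_ne_zero)).add
    (tendsto_one_div_const_mul_pow_atTop (by norm_num : (0 : ℝ) < 120) four_ne_zero)).sub
    (tendsto_one_div_const_mul_pow_atTop (by norm_num : (0 : ℝ) < 252) (by norm_num : 6 ≠ 0))
  convert h using 1
  · funext t
    simp [digammaAsymptotic]
  · norm_num

theorem tendsto_digammaRemainder : Tendsto digammaRemainder atTop (𝓝 0) := by
  have h := tendsto_digamma_add_one_sub_log.sub tendsto_digammaAsymptotic
  rw [sub_zero] at h
  exact h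

theorem digammaRemainder_sub_add_one {t : ℝ} (ht : 0 < t) :
    digammaRemainder t - digammaRemainder (t + 1) =
      log (1 + t⁻¹) - (t + 1)⁻¹ + (digammaAsymptotic (t + 1) - digammaAsymptotic t) := by
  rw [digammaRemainder, digammaRemainder, digamma_add_one (x := t + 1) (by linarith),
    ← log_add_one_sub_log ht]
  ring

theorem digammaRemainder_sub_add_one_pos {t : ℝ} (ht : 0 < t) :
    0 < digammaRemainder t - digammaRemainder (t + 1) := by
  rw [digammaRemainder_sub_add_one ht]
  refine lt_of_lt_of_le ?_
    (add_le_add_left (sub_le_sub_right (sum_range_le_log_one_add_inv ht 6) _) _)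
  simp only [digammaAsymptotic, sum_range_succ, sum_range_zero]
  norm_num
  field_simp
  rw [← sub_pos]
  ring_nf
  positivity

theorem digammaRemainder_sub_add_one_lt {t : ℝ} (ht : 0 < t) :
    digammaRemainder t - digammaRemainder (t + 1) <
      1 / (240 * t ^ 8) - 1 / (240 * (t + 1) ^ 8) := by
  rw [digammaRemainder_sub_add_one ht]
  refine lt_of_le_of_lt
    (add_le_add_left (sub_le_sub_right (log_one_add_inv_le ht 6) _) _) ?_
  have h : (1 : ℝ) - (1 / (2 * t + 1)) ^ 2 = 4 * t * (t + 1) / (2 * t + 1) ^ 2 := by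
    field_simp
    ring
  rw [h]
  simp only [digammaAsymptotic, sum_range_succ, sum_range_zero]
  norm_num
  field_simp
  rw [← sub_pos]
  ring_nf
  positivity

theorem digammaRemainder_pos {x : ℝ} (hx : 0 < x) : 0 < digammaRemainder x :=
  lt_of_add_one_lt_of_tendsto
    (fun _ hxt => sub_pos.mp (digammaRemainder_sub_add_one_pos (hx.trans_le hxt)))
    tendsto_digammaRemainder

theorem digammaRemainder_lt {x : ℝ} (hx : 0 < x) : digammaRemainder x < 1 / (240 * x ^ 8) := by
  have hlim := (tendsto_one_div_const_mul_pow_atTop (by norm_num : (0 : ℝ) < 240)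
    (by norm_num : 8 ≠ 0)).sub tendsto_digammaRemainder
  rw [sub_zero] at hlim
  have key : 0 < 1 / (240 * x ^ 8) - digammaRemainder x :=
    lt_of_add_one_lt_of_tendsto (u := fun t => 1 / (240 * t ^ 8) - digammaRemainder t)
      (fun t hxt => by linarith [digammaRemainder_sub_add_one_lt (hx.trans_le hxt)]) hlim
  linarith

theorem digamma_expansion (x : ℝ) (hx : 0 < x) :
    ∃ θ : ℝ, 0 < θ ∧ θ < 1 ∧
      digamma (x + 1) =
        Real.log x + 1 / (2 * x) - 1 / (12 * x ^ 2) + 1 / (120 * x ^ 4) -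
          1 / (252 * x ^ 6) + θ / (240 * x ^ 8) := by
  have hx8 : 0 < 240 * x ^ 8 := by positivity
  refine ⟨240 * x ^ 8 * digammaRemainder x, mul_pos hx8 (digammaRemainder_pos hx), ?_, ?_⟩
  · have := digammaRemainder_lt hx
    rw [lt_div_iff₀ hx8] at this
    linarith
  · rw [mul_div_cancel_left₀ _ hx8.ne', digammaRemainder, digammaAsymptotic]
    ring
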